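/- Let C_* be a finitely generated free ZΓ-chain complex (Γ any group) that is ZΓ-chain homotopy equivalent to a d-dimensional free ZΓ-chain complex. Then there exists a d-dimensional ZΓ-chain subcomplex D_* ⊆ C_* such that D_* and C_* agree in dimensions ≤ d-1, D_d is a finitely generated projective direct summand of C_d, and the inclusion D_* → C_* is a ZΓ-chain homotopy equivalence. -/

import Mathlib

/-!
Let `h` be a homotopy from `f = E.hom ≫ E.inv` to `𝟙 C`, where `f` factors through a
complex vanishing above degree `d`. Discarding the components of `h` out of degrees `< d`
gives a homotopy from `p = 𝟙 + dK + Kd` to `𝟙`, where `p` is `𝟙` below degree `d`,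
`𝟙 + d ∘ h` in degree `d`, and `f = 0` above `d`. As `p` is a chain map vanishing in
degree `d + 1`, the differential into degree `d` kills `p`, which makes `p` idempotent.
The images of `p` then form a subcomplex `D` with retraction `p`, and `p ≃ 𝟙` makes the
inclusion a homotopy equivalence; `D_d` is the direct summand `im p_d` of `C_d`.
-/

open CategoryTheory

namespace HomologicalComplex.Hom

variable {R : Type*} [Ring R] {ι : Type*} {c : ComplexShape ι}
  {C D : HomologicalComplex (ModuleCat R) c}

theorem apply_mem_range_of_mem_range (φ : C ⟶ D) (i j : ι) {y : D.X i}
    (hy : y ∈ LinearMap.range (φ.f i).hom) : D.d i j y ∈ LinearMap.range (φ.f j).hom := by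
  obtain ⟨x, rfl⟩ := hy
  exact ⟨C.d i j x, (ConcreteCategory.congr_hom (φ.comm i j) x).symm⟩

def range (φ : C ⟶ D) : HomologicalComplex (ModuleCat R) c where
  X i := ModuleCat.of R (LinearMap.range (φ.f i).hom)
  d i j := ModuleCat.ofHom ((D.d i j).hom.restrict fun _ => φ.apply_mem_range_of_mem_range i j)
  shape i j hij := by
    ext y
    exact ConcreteCategory.congr_hom (D.shape i j hij) y.1
  d_comp_d' i j k _ _ := by
    ext y
    exact ConcreteCategory.congr_hom (D.d_comp_d i j k) y.1

def rangeSubtype (φ : C ⟶ D) : φ.range ⟶ D where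
  f i := ModuleCat.ofHom (LinearMap.range (φ.f i).hom).subtype

def rangeRestrict (φ : C ⟶ D) : C ⟶ φ.range where
  f i := ModuleCat.ofHom (φ.f i).hom.rangeRestrict
  comm' i j _ := by
    ext x
    exact Subtype.ext (ConcreteCategory.congr_hom (φ.comm i j) x)

theorem rangeSubtype_comp_rangeRestrict {p : C ⟶ C} (hp : p ≫ p = p) :
    p.rangeSubtype ≫ p.rangeRestrict = 𝟙 p.range := by
  ext i ⟨_, x, rfl⟩
  exact Subtype.ext (ConcreteCategory.congr_hom (congrArg (fun q => q.f i) hp) x)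

theorem rangeSubtype_f_injective (φ : C ⟶ D) (i : ι) :
    Function.Injective (φ.rangeSubtype.f i) :=
  Subtype.val_injective

theorem isIso_rangeSubtype_f {φ : C ⟶ D} {i : ι} (hφ : Function.Surjective (φ.f i)) :
    IsIso (φ.rangeSubtype.f i) := by
  rw [ConcreteCategory.isIso_iff_bijective]
  refine ⟨φ.rangeSubtype_f_injective i, fun y => ?_⟩
  exact ⟨⟨y, hφ y⟩, rfl⟩

theorem subsingleton_range_X {φ : C ⟶ D} {i : ι} (hφ : φ.f i = 0) :
    Subsingleton (φ.range.X i) := by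
  change Subsingleton (LinearMap.range (φ.f i).hom)
  rw [hφ, ModuleCat.hom_zero, LinearMap.range_zero]
  infer_instance

def homotopyEquivRange {p : C ⟶ C} (hp : p ≫ p = p) (H : Homotopy p (𝟙 C)) :
    HomotopyEquiv p.range C where
  hom := p.rangeSubtype
  inv := p.rangeRestrict
  homotopyHomInvId := Homotopy.ofEq (rangeSubtype_comp_rangeRestrict hp)
  homotopyInvHomId := H

theorem rangeSubtype_f_comp_rangeRestrict_f {p : C ⟶ C} (hp : p ≫ p = p) (i : ι) :
    p.rangeSubtype.f i ≫ p.rangeRestrict.f i = 𝟙 (p.range.X i) := by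
  rw [← HomologicalComplex.comp_f, rangeSubtype_comp_rangeRestrict hp, HomologicalComplex.id_f]

theorem projective_range_X {p : C ⟶ C} (hp : p ≫ p = p) (i : ι)
    [Module.Projective R (C.X i)] :
    Module.Projective R (p.range.X i) :=
  .of_split (p.rangeSubtype.f i).hom (p.rangeRestrict.f i).hom
    (congrArg ModuleCat.Hom.hom (rangeSubtype_f_comp_rangeRestrict_f hp i))

instance finite_range_X (φ : C ⟶ D) (i : ι) [Module.Finite R (C.X i)] :
    Module.Finite R (φ.range.X i) :=
  inferInstanceAs (Module.Finite R (LinearMap.range (φ.f i).hom))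

end HomologicalComplex.Hom

namespace Homotopy

variable {V : Type*} [Category V] [Preadditive V] {C D : ChainComplex V ℕ}

def truncBelow (hom : ∀ i j, C.X i ⟶ D.X j) (d : ℕ) (i j : ℕ) : C.X i ⟶ D.X j :=
  if d ≤ i then hom i j else 0

theorem nullHomotopicMap_truncBelow_f_of_lt (hom : ∀ i j, C.X i ⟶ D.X j) {d n : ℕ}
    (hn : n < d) :
    (nullHomotopicMap (truncBelow hom d)).f n = 0 := by
  have hprev : prevD n (truncBelow hom d) = 0 := by
    rw [prevD_chainComplex, truncBelow, if_neg (by omega), Limits.zero_comp]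
  have hnext : dNext n (truncBelow hom d) = 0 := by
    cases n with
    | zero => exact dNext_zero_chainComplex _
    | succ m => rw [dNext_succ_chainComplex, truncBelow, if_neg (by omega), Limits.comp_zero]
  simp only [nullHomotopicMap, hprev, hnext, add_zero]

theorem nullHomotopicMap_truncBelow_f_self (hom : ∀ i j, C.X i ⟶ D.X j) (d : ℕ) :
    (nullHomotopicMap (truncBelow hom d)).f d = hom d (d + 1) ≫ D.d (d + 1) d := by
  have hnext : dNext d (truncBelow hom d) = 0 := by
    cases d with
    | zero => exact dNext_zero_chainComplex _
    | succ m => rw [dNext_succ_chainComplex, truncBelow, if_neg (by omega), Limits.comp_zero]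
  simp only [nullHomotopicMap, hnext, zero_add, prevD_chainComplex, truncBelow, if_pos le_rfl]

theorem nullHomotopicMap_truncBelow_f_of_gt (hom : ∀ i j, C.X i ⟶ D.X j) {d n : ℕ}
    (hn : d < n) :
    (nullHomotopicMap (truncBelow hom d)).f n = (nullHomotopicMap hom).f n := by
  obtain ⟨m, rfl⟩ : ∃ m, n = m + 1 := ⟨n - 1, by omega⟩
  simp only [nullHomotopicMap, dNext_succ_chainComplex, prevD_chainComplex, truncBelow,
    if_pos (show d ≤ m by omega), if_pos (show d ≤ m + 1 by omega)]

variable {f : C ⟶ C} (h : Homotopy f (𝟙 C)) (d : ℕ)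

noncomputable def truncatedMap : C ⟶ C := nullHomotopicMap (truncBelow h.hom d) + 𝟙 C

noncomputable def truncatedHomotopy : Homotopy (h.truncatedMap d) (𝟙 C) :=
  ((nullHomotopy (truncBelow h.hom d) fun i j hij => by
      rw [truncBelow, h.zero i j hij, ite_self]).add (Homotopy.refl (𝟙 C))).trans
    (Homotopy.ofEq (zero_add _))

theorem truncatedMap_f_of_lt {n : ℕ} (hn : n < d) : (h.truncatedMap d).f n = 𝟙 (C.X n) := by
  simp [truncatedMap, nullHomotopicMap_truncBelow_f_of_lt _ hn]

theorem truncatedMap_f_self :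
    (h.truncatedMap d).f d = h.hom d (d + 1) ≫ C.d (d + 1) d + 𝟙 (C.X d) := by
  simp [truncatedMap, nullHomotopicMap_truncBelow_f_self]

variable {d}

theorem truncatedMap_f_of_gt (hf : ∀ n, d < n → f.f n = 0) {n : ℕ} (hn : d < n) :
    (h.truncatedMap d).f n = 0 := by
  rw [← hf n hn, h.comm n, truncatedMap, HomologicalComplex.add_f_apply,
    nullHomotopicMap_truncBelow_f_of_gt _ hn]
  rfl

theorem truncatedMap_idem (hf : ∀ n, d < n → f.f n = 0) :
    h.truncatedMap d ≫ h.truncatedMap d = h.truncatedMap d := by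
  ext n
  rw [HomologicalComplex.comp_f]
  rcases lt_trichotomy n d with hn | rfl | hn
  · simp only [h.truncatedMap_f_of_lt d hn, Category.comp_id]
  · have hd : C.d (n + 1) n ≫ (h.truncatedMap n).f n = 0 := by
      rw [← (h.truncatedMap n).comm, h.truncatedMap_f_of_gt hf (Nat.lt_succ_self n),
        Limits.zero_comp]
    nth_rewrite 1 [h.truncatedMap_f_self n]
    rw [Preadditive.add_comp, Category.assoc, hd, Limits.comp_zero, zero_add, Category.id_comp]
  · simp only [h.truncatedMap_f_of_gt hf hn, Limits.zero_comp]

end Homotopy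

open HomologicalComplex.Hom in
theorem ChainComplex.exists_subcomplex_homotopyEquiv_of_homotopyEquiv_bounded
    {R : Type*} [Ring R] {d : ℕ} {C D' : ChainComplex (ModuleCat R) ℕ}
    [Module.Projective R (C.X d)] [Module.Finite R (C.X d)]
    (hD' : ∀ n, d < n → Subsingleton (D'.X n)) (E : HomotopyEquiv C D') :
    ∃ (D : ChainComplex (ModuleCat R) ℕ) (ι : D ⟶ C),
      (∀ n, Function.Injective ⇑(ι.f n)) ∧
      (∀ n, d < n → Subsingleton (D.X n : Type _)) ∧
      (∀ n, n < d → IsIso (ι.f n)) ∧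
      Module.Projective R (D.X d) ∧
      Module.Finite R (D.X d) ∧
      (∃ r : C.X d ⟶ D.X d, ι.f d ≫ r = 𝟙 (D.X d)) ∧
      ∃ e : HomotopyEquiv D C, e.hom = ι := by
  have hf : ∀ n, d < n → (E.hom ≫ E.inv).f n = 0 := fun n hn => by
    have := hD' n hn
    rw [HomologicalComplex.comp_f,
      (ModuleCat.isZero_of_subsingleton (D'.X n)).eq_zero_of_tgt (E.hom.f n), Limits.zero_comp]
  let h := E.homotopyHomInvId
  let p := h.truncatedMap d
  have hp : p ≫ p = p := h.truncatedMap_idem hf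
  refine ⟨p.range, p.rangeSubtype, p.rangeSubtype_f_injective,
    fun n hn => subsingleton_range_X (h.truncatedMap_f_of_gt hf hn),
    fun n hn => isIso_rangeSubtype_f ?_, projective_range_X hp d, inferInstance,
    ⟨_, rangeSubtype_f_comp_rangeRestrict_f hp d⟩,
    ⟨homotopyEquivRange hp (h.truncatedHomotopy d), rfl⟩⟩
  rw [h.truncatedMap_f_of_lt d hn]
  exact fun y => ⟨y, rfl⟩

/-- Let `C_*` be a finitely generated free `ℤΓ`-chain complex which is
`ℤΓ`-chain homotopy equivalent to a `d`-dimensional free `ℤΓ`-chain complex.  Then there is a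
`d`-dimensional subcomplex `D_* ⊆ C_*` agreeing with `C_*` in dimensions `≤ d-1`, with `D_d` a
finitely generated projective direct summand of `C_d`, such that the inclusion `D_* → C_*` is a
`ℤΓ`-chain homotopy equivalence. -/
theorem stmt_19 (Γ : Type) [Group Γ] (d : ℕ)
    (C : ChainComplex (ModuleCat (MonoidAlgebra ℤ Γ)) ℕ)
    (hfree : ∀ n, Module.Free (MonoidAlgebra ℤ Γ) (C.X n))
    (hfg : ∀ n, Module.Finite (MonoidAlgebra ℤ Γ) (C.X n))
    (hdim : ∃ D' : ChainComplex (ModuleCat (MonoidAlgebra ℤ Γ)) ℕ,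
      (∀ n, Module.Free (MonoidAlgebra ℤ Γ) (D'.X n)) ∧
      (∀ n, d < n → Subsingleton (D'.X n : Type _)) ∧ Nonempty (HomotopyEquiv C D')) :
    ∃ (D : ChainComplex (ModuleCat (MonoidAlgebra ℤ Γ)) ℕ) (ι : D ⟶ C),
      (∀ n, Function.Injective ⇑(ι.f n)) ∧
      (∀ n, d < n → Subsingleton (D.X n : Type _)) ∧
      (∀ n, n < d → IsIso (ι.f n)) ∧
      Module.Projective (MonoidAlgebra ℤ Γ) (D.X d) ∧
      Module.Finite (MonoidAlgebra ℤ Γ) (D.X d) ∧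
      (∃ r : C.X d ⟶ D.X d, ι.f d ≫ r = 𝟙 (D.X d)) ∧
      ∃ e : HomotopyEquiv D C, e.hom = ι := by
  obtain ⟨D', -, hD', ⟨E⟩⟩ := hdim
  have := hfree d
  have := hfg d
  exact ChainComplex.exists_subcomplex_homotopyEquiv_of_homotopyEquiv_bounded hD' E
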